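/- Let P be a program over 𝒰, A, B ⊆ 𝒰, and let Q be a program over 𝒰 ∖ A such that SE^{Ā, B ∖ A}(Q) = {⟨X,Y⟩ : Y ⊆ 𝒰 ∖ A and X ∈ ⋂𝓡^Y_{⟨P,A,B⟩}}. Then Q is a B-relativized A-simplification of P if and only if P is B-relativized A-simplifiable. -/
import Mathlib


/-- An extended rule over a type of atoms: head, positive body, negative body,
double-negated body. -/
structure ASPRule (Atom : Type) where
  head : Finset Atom
  pos : Finset Atom
  neg : Finset Atom
  nneg : Finset Atom
deriving DecidableEq

/-- A program is a finite set of rules. -/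
abbrev ASPProgram (Atom : Type) [DecidableEq Atom] := Finset (ASPRule Atom)

section Defs

variable {Atom : Type} [DecidableEq Atom] [Fintype Atom]

/-- A rule is over `S` if all its atoms lie in `S`. -/
def ruleOver (r : ASPRule Atom) (S : Finset Atom) : Prop :=
  r.head ⊆ S ∧ r.pos ⊆ S ∧ r.neg ⊆ S ∧ r.nneg ⊆ S

/-- A program is over `S` if all its rules are over `S`. -/
def progOver (P : ASPProgram Atom) (S : Finset Atom) : Prop :=
  ∀ r ∈ P, ruleOver r S

/-- `I` satisfies (is a model of) rule `r`. -/
def satRule (I : Finset Atom) (r : ASPRule Atom) : Prop :=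
  ((r.head ∪ r.neg) ∩ I).Nonempty ∨ ¬ (r.pos ∪ r.nneg ⊆ I)

/-- `I` is a model of program `P`. -/
def sat (I : Finset Atom) (P : ASPProgram Atom) : Prop :=
  ∀ r ∈ P, satRule I r

/-- The GL-reduct `P^I`. -/
def reduct (P : ASPProgram Atom) (I : Finset Atom) : ASPProgram Atom :=
  (P.filter (fun r => r.neg ∩ I = ∅ ∧ r.nneg ⊆ I)).image
    (fun r => ⟨r.head, r.pos, ∅, ∅⟩)

/-- The answer sets of `P`: minimal models of the reduct. -/
def AS (P : ASPProgram Atom) : Set (Finset Atom) :=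
  {I | sat I (reduct P I) ∧ ∀ J ⊂ I, ¬ sat J (reduct P I)}

/-- Projection of a program onto `𝒰 ∖ A`: rules with a head or negative-body atom
from `A` are dropped; in the remaining rules the atoms of `A` are removed from the
positive and double-negated bodies. -/
def projAway (P : ASPProgram Atom) (A : Finset Atom) : ASPProgram Atom :=
  (P.filter (fun r => r.neg ∩ A = ∅ ∧ r.head ∩ A = ∅)).image
    (fun r => ⟨r.head, r.pos \ A, r.neg, r.nneg \ A⟩)

/-- `R` is `A`-separated: a union of a program over `𝒰 ∖ A` and a program over `A`. -/
def ASeparated (R : ASPProgram Atom) (A : Finset Atom) : Prop :=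
  ∃ R₁ R₂ : ASPProgram Atom, R = R₁ ∪ R₂ ∧ progOver R₁ Aᶜ ∧ progOver R₂ A

/-- The defining equation of a (strong) `A`-simplification of `P` relative to `B`:
`AS(P ∪ R)_{|Ā} = AS(Q ∪ R_{|Ā})` for every `A`-separated program `R` over `B`. -/
def SimpEq (P : ASPProgram Atom) (A B : Finset Atom) (Q : ASPProgram Atom) : Prop :=
  ∀ R : ASPProgram Atom, progOver R B → ASeparated R A →
    (fun I => I \ A) '' AS (P ∪ R) = AS (Q ∪ projAway R A)

/-- The SE-models of `P`. -/
def SE (P : ASPProgram Atom) : Set (Finset Atom × Finset Atom) :=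
  {p | p.1 ⊆ p.2 ∧ sat p.2 P ∧ sat p.1 (reduct P p.2)}

/-- The (relativized) `B`-SE-models of `P`. -/
def SEB (B : Finset Atom) (P : ASPProgram Atom) : Set (Finset Atom × Finset Atom) :=
  {p | (p.1 = p.2 ∨ p.1 ⊂ p.2 ∩ B) ∧ sat p.2 P ∧
    (∀ Y' ⊂ p.2, Y' ∩ B = p.2 ∩ B → ¬ sat Y' (reduct P p.2)) ∧
    (p.1 ⊂ p.2 → ∃ X' ⊆ p.2, X' ∩ B = p.1 ∧ sat X' (reduct P p.2))}

/-- `SE^{A₁,A₂}(P)`: the `A₂`-SE-models `⟨X,Y⟩` of `P` with `Y ⊆ A₁`. -/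
def SERel (P : ASPProgram Atom) (A₁ A₂ : Finset Atom) : Set (Finset Atom × Finset Atom) :=
  {p | p ∈ SEB A₂ P ∧ p.2 ⊆ A₁}

/-- `P` satisfies `Δʳ` for `A`, `B`. -/
def DeltaR (P : ASPProgram Atom) (A B : Finset Atom) : Prop :=
  (∀ Y : Finset Atom, (Y, Y) ∈ SEB B P → A ∩ B ⊆ Y) ∧
  (∀ X Y : Finset Atom, (X, Y) ∈ SE P → (Y, Y) ∈ SEB B P → X \ A = Y \ A → X = Y) ∧
  (∀ X Y : Finset Atom, (X, Y) ∈ SEB B P → (X ∪ (Y ∩ A ∩ B), Y) ∈ SEB B P)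

/-- The family `𝓡^Y_{⟨P,A,B⟩}`. -/
def RFam (P : ASPProgram Atom) (A B Y : Finset Atom) : Set (Set (Finset Atom)) :=
  {S | ∃ A' ⊆ A, (Y ∪ A', Y ∪ A') ∈ SEB B P ∧
    S = {Z | ∃ X : Finset Atom, (X, Y ∪ A') ∈ SEB B P ∧ Z = X \ A}}

/-- `P` satisfies criterion `Ω_{A,B}`: for some `Y ⊆ 𝒰 ∖ A` the family
`𝓡^Y_{⟨P,A,B⟩}` is non-empty and has no `⊆`-least element. -/
def OmegaCrit (P : ASPProgram Atom) (A B : Finset Atom) : Prop :=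
  ∃ Y : Finset Atom, Y ⊆ Aᶜ ∧ (RFam P A B Y).Nonempty ∧
    ¬ ∃ S ∈ RFam P A B Y, ∀ T ∈ RFam P A B Y, S ⊆ T

/-- `⋂ 𝓡^Y_{⟨P,A,B⟩}`, taken to be `∅` when the family is empty. -/
def RInter (P : ASPProgram Atom) (A B Y : Finset Atom) : Set (Finset Atom) :=
  {X | (RFam P A B Y).Nonempty ∧ ∀ S ∈ RFam P A B Y, X ∈ S}

/-- The `A`-`B`-SE-models `SE^B_A(P)` of `P`. -/
def SEBA (P : ASPProgram Atom) (A B : Finset Atom) : Set (Finset Atom × Finset Atom) :=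
  {p | ∃ Y : Finset Atom, (Y, Y) ∈ SEB B P ∧ p = (Y \ A, Y \ A)} ∪
  {p | ∃ X Y : Finset Atom, (X, Y) ∈ SEB B P ∧ X ⊂ Y ∧
    (∀ Y' : Finset Atom, (Y', Y') ∈ SEB B P → Y' \ A = Y \ A →
      ∃ X' : Finset Atom, (X', Y') ∈ SEB B P ∧ X' \ A = X \ A) ∧
    p = (X \ A, Y \ A)}

end Defs

set_option linter.unusedSectionVars false

section Lemmas
variable {Atom : Type} [DecidableEq Atom] [Fintype Atom]

lemma fin_union_nonempty {s t : Finset Atom} :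
    (s ∪ t).Nonempty ↔ s.Nonempty ∨ t.Nonempty := by
  constructor
  · rintro ⟨a, ha⟩
    exact (Finset.mem_union.mp ha).imp (⟨a, ·⟩) (⟨a, ·⟩)
  · rintro (⟨a, ha⟩ | ⟨a, ha⟩)
    · exact ⟨a, Finset.mem_union_left _ ha⟩
    · exact ⟨a, Finset.mem_union_right _ ha⟩

lemma mem_reduct {P : ASPProgram Atom} {I : Finset Atom} {r' : ASPRule Atom} :
    r' ∈ reduct P I ↔ ∃ r, (r ∈ P ∧ r.neg ∩ I = ∅ ∧ r.nneg ⊆ I) ∧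
      (⟨r.head, r.pos, ∅, ∅⟩ : ASPRule Atom) = r' := by
  simp [reduct, Finset.mem_image, Finset.mem_filter, and_assoc]

lemma satRule_iff {I : Finset Atom} {r : ASPRule Atom} :
    satRule I r ↔ ((r.head ∩ I).Nonempty ∨ (r.neg ∩ I).Nonempty ∨
      ¬ r.pos ⊆ I ∨ ¬ r.nneg ⊆ I) := by
  rw [satRule, Finset.union_inter_distrib_right, fin_union_nonempty,
    Finset.union_subset_iff]
  tauto

lemma sat_reduct_self {P : ASPProgram Atom} {I : Finset Atom} :
    sat I (reduct P I) ↔ sat I P := by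
  constructor
  · intro h r hr
    rw [satRule_iff]
    by_cases hneg : (r.neg ∩ I).Nonempty
    · exact Or.inr (Or.inl hneg)
    by_cases hnn : r.nneg ⊆ I
    · have hne : r.neg ∩ I = ∅ := Finset.not_nonempty_iff_eq_empty.mp hneg
      have hmem : (⟨r.head, r.pos, ∅, ∅⟩ : ASPRule Atom) ∈ reduct P I :=
        mem_reduct.mpr ⟨r, ⟨hr, hne, hnn⟩, rfl⟩
      have h2 := satRule_iff.mp (h _ hmem)
      simp only [Finset.empty_inter, Finset.not_nonempty_empty, false_or,
        Finset.empty_subset, not_true, or_false] at h2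
      exact h2.imp id (fun hp => Or.inr (Or.inl hp))
    · exact Or.inr (Or.inr (Or.inr hnn))
  · intro h r' hr'
    obtain ⟨r, ⟨hrP, hneg, hnn⟩, rfl⟩ := mem_reduct.mp hr'
    have h2 := satRule_iff.mp (h r hrP)
    rw [satRule_iff]
    simp only [Finset.empty_inter, Finset.not_nonempty_empty, false_or,
      Finset.empty_subset, not_true, or_false]
    rw [hneg] at h2
    simp only [Finset.not_nonempty_empty, false_or] at h2
    rcases h2 with h2 | h2 | h2
    · exact Or.inl h2
    · exact Or.inr h2
    · exact absurd hnn h2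

lemma reduct_union {P R : ASPProgram Atom} {I : Finset Atom} :
    reduct (P ∪ R) I = reduct P I ∪ reduct R I := by
  simp [reduct, Finset.filter_union, Finset.image_union]

lemma sat_union {I : Finset Atom} {P R : ASPProgram Atom} :
    sat I (P ∪ R) ↔ sat I P ∧ sat I R := by
  simp [sat, Finset.mem_union, or_imp, forall_and]

lemma mem_AS {P : ASPProgram Atom} {I : Finset Atom} :
    I ∈ AS P ↔ sat I (reduct P I) ∧ ∀ J ⊂ I, ¬ sat J (reduct P I) := Iff.rfl

lemma mem_SEB {C : Finset Atom} {P : ASPProgram Atom} {X Y : Finset Atom} :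
    (X, Y) ∈ SEB C P ↔ (X = Y ∨ X ⊂ Y ∩ C) ∧ sat Y P ∧
      (∀ Y' ⊂ Y, Y' ∩ C = Y ∩ C → ¬ sat Y' (reduct P Y)) ∧
      (X ⊂ Y → ∃ X' ⊆ Y, X' ∩ C = X ∧ sat X' (reduct P Y)) := Iff.rfl

/-- characteristic facts program -/
def facts (S : Finset Atom) : ASPProgram Atom :=
  S.image fun a => ⟨{a}, ∅, ∅, ∅⟩

/-- characteristic pair-rules program -/
def pairs (D : Finset Atom) : ASPProgram Atom :=
  (D ×ˢ D).image fun q => ⟨{q.2}, {q.1}, ∅, ∅⟩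

lemma reduct_simple {P : ASPProgram Atom} (h : ∀ r ∈ P, r.neg = ∅ ∧ r.nneg = ∅)
    (I : Finset Atom) : reduct P I = P := by
  ext r
  rw [mem_reduct]
  constructor
  · rintro ⟨r', ⟨hr', _, _⟩, rfl⟩
    obtain ⟨h1, h2⟩ := h r' hr'
    have : r' = (⟨r'.head, r'.pos, ∅, ∅⟩ : ASPRule Atom) := by
      cases r'; simp_all
    rw [← this]; exact hr'
  · intro hr
    refine ⟨r, ⟨hr, by rw [(h r hr).1]; simp, by rw [(h r hr).2]; simp⟩, ?_⟩
    obtain ⟨h1, h2⟩ := h r hr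
    cases r; simp_all

lemma facts_simple {S : Finset Atom} : ∀ r ∈ facts S, r.neg = ∅ ∧ r.nneg = ∅ := by
  intro r hr
  simp only [facts, Finset.mem_image] at hr
  obtain ⟨a, _, rfl⟩ := hr
  exact ⟨rfl, rfl⟩

lemma pairs_simple {D : Finset Atom} : ∀ r ∈ pairs D, r.neg = ∅ ∧ r.nneg = ∅ := by
  intro r hr
  simp only [pairs, Finset.mem_image] at hr
  obtain ⟨a, _, rfl⟩ := hr
  exact ⟨rfl, rfl⟩

lemma reduct_facts {S I : Finset Atom} : reduct (facts S) I = facts S :=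
  reduct_simple facts_simple I

lemma reduct_pairs {D I : Finset Atom} : reduct (pairs D) I = pairs D :=
  reduct_simple pairs_simple I

lemma singleton_inter_ne {a : Atom} {I : Finset Atom} :
    (({a} : Finset Atom) ∩ I).Nonempty ↔ a ∈ I := by
  constructor
  · rintro ⟨b, hb⟩
    obtain ⟨h1, h2⟩ := Finset.mem_inter.mp hb
    rwa [Finset.mem_singleton.mp h1] at h2
  · intro h
    exact ⟨a, Finset.mem_inter.mpr ⟨Finset.mem_singleton_self a, h⟩⟩

lemma sat_facts {I S : Finset Atom} : sat I (facts S) ↔ S ⊆ I := by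
  simp only [sat, facts, Finset.mem_image, forall_exists_index, and_imp]
  constructor
  · intro h a ha
    have := satRule_iff.mp (h _ a ha rfl)
    simpa [singleton_inter_ne] using this
  · intro h r a ha hr
    subst hr
    rw [satRule_iff]
    simp [singleton_inter_ne]
    exact h ha

lemma sat_pairs {I D : Finset Atom} :
    sat I (pairs D) ↔ ∀ c ∈ D, c ∈ I → D ⊆ I := by
  simp only [sat, pairs, Finset.mem_image, forall_exists_index, and_imp,
    Finset.mem_product]
  constructor
  · intro h c hc hcI c' hc'
    have := satRule_iff.mp (h _ (c, c') hc hc' rfl)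
    simp [singleton_inter_ne, Finset.singleton_subset_iff] at this
    tauto
  · intro h r q hq1 hq2 heq
    subst heq
    rw [satRule_iff]
    simp [singleton_inter_ne, Finset.singleton_subset_iff]
    by_cases hqI : q.1 ∈ I
    · exact Or.inl (h q.1 hq1 hqI hq2)
    · exact Or.inr hqI

lemma progOver_union {P R : ASPProgram Atom} {S : Finset Atom} :
    progOver (P ∪ R) S ↔ progOver P S ∧ progOver R S := by
  simp [progOver, Finset.mem_union, or_imp, forall_and]

lemma progOver_mono {P : ASPProgram Atom} {S T : Finset Atom}
    (h : progOver P S) (hST : S ⊆ T) : progOver P T := by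
  intro r hr
  obtain ⟨h1, h2, h3, h4⟩ := h r hr
  exact ⟨h1.trans hST, h2.trans hST, h3.trans hST, h4.trans hST⟩

lemma progOver_empty {S : Finset Atom} : progOver (∅ : ASPProgram Atom) S :=
  fun r hr => absurd hr (Finset.notMem_empty r)

lemma progOver_facts {S T : Finset Atom} (h : S ⊆ T) : progOver (facts S) T := by
  intro r hr
  simp only [facts, Finset.mem_image] at hr
  obtain ⟨a, ha, rfl⟩ := hr
  exact ⟨Finset.singleton_subset_iff.mpr (h ha), Finset.empty_subset _,
    Finset.empty_subset _, Finset.empty_subset _⟩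

lemma progOver_pairs {D T : Finset Atom} (h : D ⊆ T) : progOver (pairs D) T := by
  intro r hr
  simp only [pairs, Finset.mem_image, Finset.mem_product] at hr
  obtain ⟨q, hq, rfl⟩ := hr
  exact ⟨Finset.singleton_subset_iff.mpr (h hq.2),
    Finset.singleton_subset_iff.mpr (h hq.1), Finset.empty_subset _,
    Finset.empty_subset _⟩

lemma sdiff_of_subset_compl {s A : Finset Atom} (h : s ⊆ Aᶜ) : s \ A = s := by
  rw [Finset.sdiff_eq_self_iff_disjoint, Finset.disjoint_left]
  intro a ha haA
  exact Finset.mem_compl.mp (h ha) haA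

lemma inter_of_subset_compl {s A : Finset Atom} (h : s ⊆ Aᶜ) : s ∩ A = ∅ := by
  rw [← Finset.disjoint_iff_inter_eq_empty, Finset.disjoint_left]
  intro a ha haA
  exact Finset.mem_compl.mp (h ha) haA

lemma projAway_union {P R : ASPProgram Atom} {A : Finset Atom} :
    projAway (P ∪ R) A = projAway P A ∪ projAway R A := by
  simp [projAway, Finset.filter_union, Finset.image_union]

lemma projAway_over {S : ASPProgram Atom} {A : Finset Atom}
    (h : progOver S Aᶜ) : projAway S A = S := by
  ext r
  simp only [projAway, Finset.mem_image, Finset.mem_filter]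
  constructor
  · rintro ⟨r', ⟨hr', hneg, hh⟩, rfl⟩
    obtain ⟨o1, o2, o3, o4⟩ := h r' hr'
    have e2 : r'.pos \ A = r'.pos := sdiff_of_subset_compl o2
    have e4 : r'.nneg \ A = r'.nneg := sdiff_of_subset_compl o4
    rw [e2, e4]
    have : (⟨r'.head, r'.pos, r'.neg, r'.nneg⟩ : ASPRule Atom) = r' := by
      cases r'; rfl
    rwa [this]
  · intro hr
    obtain ⟨o1, o2, o3, o4⟩ := h r hr
    refine ⟨r, ⟨hr, inter_of_subset_compl o3, inter_of_subset_compl o1⟩, ?_⟩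
    rw [sdiff_of_subset_compl o2, sdiff_of_subset_compl o4]

lemma facts_union {S T : Finset Atom} : facts (S ∪ T) = facts S ∪ facts T :=
  Finset.image_union _ _

lemma projAway_facts_subsetA {T A : Finset Atom} (h : T ⊆ A) :
    projAway (facts T) A = ∅ := by
  rw [Finset.eq_empty_iff_forall_notMem]
  intro r hr
  simp only [projAway, Finset.mem_image, Finset.mem_filter, facts] at hr
  obtain ⟨r', ⟨hr', hneg, hh⟩, rfl⟩ := hr
  obtain ⟨a, ha, rfl⟩ := hr'
  rw [Finset.eq_empty_iff_forall_notMem] at hh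
  exact hh a (Finset.mem_inter.mpr ⟨Finset.mem_singleton_self a, h ha⟩)

lemma sat_reduct_transfer {S : ASPProgram Atom} {C I J K : Finset Atom}
    (hS : progOver S C) (h1 : sat J (reduct S I)) (h2 : K ∩ C = J ∩ C) :
    sat K (reduct S I) := by
  intro r' hr'
  obtain ⟨r, ⟨hrS, hneg, hnn⟩, rfl⟩ := mem_reduct.mp hr'
  have hJ := satRule_iff.mp (h1 _ hr')
  simp only [Finset.empty_inter, Finset.not_nonempty_empty, false_or,
    Finset.empty_subset, not_true, or_false] at hJ
  rw [satRule_iff]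
  simp only [Finset.empty_inter, Finset.not_nonempty_empty, false_or,
    Finset.empty_subset, not_true, or_false]
  by_cases hp : r.pos ⊆ K
  · left
    have hpJ : r.pos ⊆ J := by
      intro a ha
      have haK : a ∈ K ∩ C := Finset.mem_inter.mpr ⟨hp ha, (hS r hrS).2.1 ha⟩
      rw [h2] at haK
      exact (Finset.mem_inter.mp haK).1
    rcases hJ with hJ | hJ
    · obtain ⟨a, haa⟩ := hJ
      obtain ⟨hah, haJ⟩ := Finset.mem_inter.mp haa
      have haC : a ∈ C := (hS r hrS).1 hah
      have : a ∈ K ∩ C := by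
        rw [h2]; exact Finset.mem_inter.mpr ⟨haJ, haC⟩
      exact ⟨a, Finset.mem_inter.mpr ⟨hah, (Finset.mem_inter.mp this).1⟩⟩
    · exact absurd hpJ hJ
  · exact Or.inr hp

lemma SEB_over {Q'' : ASPProgram Atom} {A C : Finset Atom}
    (hQ : progOver Q'' Aᶜ) (hC : C ⊆ Aᶜ) {X Y : Finset Atom}
    (hmem : (X, Y) ∈ SEB C Q'') : Y ⊆ Aᶜ := by
  by_contra hnot
  rw [Finset.not_subset] at hnot
  obtain ⟨a, haY, haA'⟩ := hnot
  have haA : a ∈ A := by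
    by_contra h
    exact haA' (Finset.mem_compl.mpr h)
  obtain ⟨_, hsat, hmin, _⟩ := mem_SEB.mp hmem
  refine hmin (Y.erase a) (Finset.erase_ssubset haY) ?_ ?_
  · ext b
    simp only [Finset.mem_inter, Finset.mem_erase]
    constructor
    · rintro ⟨⟨_, hb⟩, hbC⟩
      exact ⟨hb, hbC⟩
    · rintro ⟨hbY, hbC⟩
      refine ⟨⟨?_, hbY⟩, hbC⟩
      rintro rfl
      exact Finset.mem_compl.mp (hC hbC) haA
  · intro r' hr'
    obtain ⟨r, ⟨hrS, hneg, hnn⟩, rfl⟩ := mem_reduct.mp hr'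
    rw [satRule_iff]
    simp only [Finset.empty_inter, Finset.not_nonempty_empty, false_or,
      Finset.empty_subset, not_true, or_false]
    by_cases hp : r.pos ⊆ Y.erase a
    · left
      have hpY : r.pos ⊆ Y := hp.trans (Finset.erase_subset a Y)
      have := satRule_iff.mp (hsat r hrS)
      rw [hneg] at this
      simp only [Finset.not_nonempty_empty, false_or] at this
      rcases this with h | h | h
      · obtain ⟨b, hb⟩ := h
        obtain ⟨hbh, hbY⟩ := Finset.mem_inter.mp hb
        refine ⟨b, Finset.mem_inter.mpr ⟨hbh, Finset.mem_erase.mpr ⟨?_, hbY⟩⟩⟩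
        rintro rfl
        exact Finset.mem_compl.mp ((hQ r hrS).1 hbh) haA
      · exact absurd hpY h
      · exact absurd hnn h
    · exact Or.inr hp

lemma AS_union_subset {Q₁ Q₂ S : ASPProgram Atom} {C : Finset Atom}
    (hS : progOver S C) (h : SEB C Q₁ = SEB C Q₂) :
    AS (Q₁ ∪ S) ⊆ AS (Q₂ ∪ S) := by
  intro I hI
  obtain ⟨hIsat, hImin⟩ := hI
  rw [reduct_union] at hIsat
  obtain ⟨hQ1r, hSr⟩ := sat_union.mp hIsat
  have hQ1 : sat I Q₁ := sat_reduct_self.mp hQ1r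
  have hSsat : sat I S := sat_reduct_self.mp hSr
  have hII : ((I, I) : Finset Atom × Finset Atom) ∈ SEB C Q₁ := by
    refine ⟨Or.inl rfl, hQ1, ?_, fun h' => absurd rfl h'.ne⟩
    intro Y' hY' hYC hsatY'
    have hYS : sat Y' (reduct S I) := sat_reduct_transfer hS hSr hYC
    exact hImin Y' hY' (by rw [reduct_union]; exact sat_union.mpr ⟨hsatY', hYS⟩)
  rw [h] at hII
  refine ⟨?_, ?_⟩
  · rw [reduct_union]
    exact sat_union.mpr ⟨sat_reduct_self.mpr hII.2.1, hSr⟩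
  · intro J hJ hsatJ
    rw [reduct_union] at hsatJ
    obtain ⟨hJQ2, hJS⟩ := sat_union.mp hsatJ
    by_cases hc : J ∩ C = I ∩ C
    · exact hII.2.2.1 J hJ hc hJQ2
    · have hJC : J ∩ C ⊂ I ∩ C :=
        lt_of_le_of_ne (Finset.inter_subset_inter_right hJ.subset) hc
      have hJCI : J ∩ C ⊂ I := by
        refine lt_of_le_of_ne ((Finset.inter_subset_left).trans hJ.subset) ?_
        intro he
        have h1 : I ⊆ J := he ▸ Finset.inter_subset_left
        exact hJ.ne (Finset.Subset.antisymm hJ.subset h1)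
      have hmem : ((J ∩ C, I) : Finset Atom × Finset Atom) ∈ SEB C Q₂ :=
        ⟨Or.inr hJC, hII.2.1, hII.2.2.1, fun _ => ⟨J, hJ.subset, rfl, hJQ2⟩⟩
      rw [← h] at hmem
      obtain ⟨X', hX'I, hX'C, hX'sat⟩ := hmem.2.2.2 hJCI
      have hX'S : sat X' (reduct S I) := sat_reduct_transfer hS hJS hX'C
      have hX'ssub : X' ⊂ I := by
        refine lt_of_le_of_ne hX'I ?_
        rintro rfl
        exact hc hX'C.symm
      exact hImin X' hX'ssub (by rw [reduct_union]; exact sat_union.mpr ⟨hX'sat, hX'S⟩)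

lemma AS_union_eq {Q₁ Q₂ S : ASPProgram Atom} {C : Finset Atom}
    (hS : progOver S C) (h : SEB C Q₁ = SEB C Q₂) :
    AS (Q₁ ∪ S) = AS (Q₂ ∪ S) :=
  Set.Subset.antisymm (AS_union_subset hS h) (AS_union_subset hS h.symm)

lemma sdiffBA_subset_compl {A B : Finset Atom} : B \ A ⊆ Aᶜ :=
  fun a ha => Finset.mem_compl.mpr (Finset.mem_sdiff.mp ha).2

lemma union_sdiff_A {Y A' A : Finset Atom} (hY : Y ⊆ Aᶜ) (hA' : A' ⊆ A) :
    (Y ∪ A') \ A = Y := by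
  rw [Finset.union_sdiff_distrib, sdiff_of_subset_compl hY,
    Finset.sdiff_eq_empty_iff_subset.mpr hA', Finset.union_empty]

lemma projAway_facts {S A : Finset Atom} :
    projAway (facts S) A = facts (S \ A) := by
  have h1 : facts S = facts (S \ A) ∪ facts (S ∩ A) := by
    rw [← facts_union, Finset.sdiff_union_inter]
  rw [h1, projAway_union, projAway_over (progOver_facts (fun a ha =>
    Finset.mem_compl.mpr (Finset.mem_sdiff.mp ha).2)),
    projAway_facts_subsetA Finset.inter_subset_right, Finset.union_empty]

lemma ASeparated_facts {S A : Finset Atom} : ASeparated (facts S) A := by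
  refine ⟨facts (S \ A), facts (S ∩ A), ?_, ?_, ?_⟩
  · rw [← facts_union, Finset.sdiff_union_inter]
  · exact progOver_facts (fun a ha => Finset.mem_compl.mpr (Finset.mem_sdiff.mp ha).2)
  · exact progOver_facts Finset.inter_subset_right

lemma totL {P Q' : ASPProgram Atom} {A B : Finset Atom}
    (h' : SimpEq P A B Q') {Y : Finset Atom}
    (hmem : ((Y, Y) : Finset Atom × Finset Atom) ∈ SEB (B \ A) Q') :
    ∃ A' ⊆ A, ((Y ∪ A', Y ∪ A') : Finset Atom × Finset Atom) ∈ SEB B P := by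
  set FY := facts (Y ∩ (B \ A)) with hFY
  have hsubC : Y ∩ (B \ A) ⊆ B \ A := Finset.inter_subset_right
  have hFB : progOver FY B := progOver_facts (hsubC.trans Finset.sdiff_subset)
  have hFc : progOver FY Aᶜ := progOver_facts (hsubC.trans sdiffBA_subset_compl)
  have heq := h' FY hFB ⟨FY, ∅, (Finset.union_empty _).symm, hFc, progOver_empty⟩
  rw [projAway_over hFc] at heq
  obtain ⟨hc1, hsatQ, hminQ, _⟩ := mem_SEB.mp hmem
  have hYAS : Y ∈ AS (Q' ∪ FY) := by
    refine ⟨?_, ?_⟩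
    · rw [reduct_union]
      refine sat_union.mpr ⟨sat_reduct_self.mpr hsatQ, ?_⟩
      rw [hFY, reduct_facts]
      exact sat_facts.mpr Finset.inter_subset_left
    · intro J hJ hsatJ
      rw [reduct_union, hFY, reduct_facts] at hsatJ
      obtain ⟨h1, h2⟩ := sat_union.mp hsatJ
      have hYC : Y ∩ (B \ A) ⊆ J := sat_facts.mp h2
      have hJC : J ∩ (B \ A) = Y ∩ (B \ A) := by
        refine Finset.Subset.antisymm
          (Finset.inter_subset_inter_right hJ.subset) ?_
        intro a ha
        exact Finset.mem_inter.mpr ⟨hYC ha, (Finset.mem_inter.mp ha).2⟩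
      exact hminQ J hJ hJC h1
  rw [← heq] at hYAS
  obtain ⟨I, hIAS, hIA⟩ := hYAS
  refine ⟨I ∩ A, Finset.inter_subset_right, ?_⟩
  have hIY : Y ∪ I ∩ A = I := by
    rw [← hIA]
    ext a
    simp only [Finset.mem_union, Finset.mem_sdiff, Finset.mem_inter]
    by_cases h : a ∈ A <;> by_cases h2 : a ∈ I <;> simp [h, h2]
  rw [hIY]
  obtain ⟨hIsat, hImin⟩ := hIAS
  rw [reduct_union] at hIsat
  obtain ⟨hPr, hFr⟩ := sat_union.mp hIsat
  have hYI : Y ⊆ I := by rw [← hIA]; exact Finset.sdiff_subset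
  refine ⟨Or.inl rfl, sat_reduct_self.mp hPr, ?_, fun hx => absurd rfl hx.ne⟩
  intro J hJ hJB hsatJ
  have hfacts : Y ∩ (B \ A) ⊆ J := by
    intro a ha
    obtain ⟨haY, haBA⟩ := Finset.mem_inter.mp ha
    have : a ∈ I ∩ B := Finset.mem_inter.mpr ⟨hYI haY, (Finset.mem_sdiff.mp haBA).1⟩
    rw [← hJB] at this
    exact (Finset.mem_inter.mp this).1
  refine hImin J hJ ?_
  rw [reduct_union, hFY, reduct_facts]
  exact sat_union.mpr ⟨hsatJ, sat_facts.mpr hfacts⟩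

lemma totR {P Q' : ASPProgram Atom} {A B : Finset Atom}
    (h' : SimpEq P A B Q') {Y A' : Finset Atom} (hY : Y ⊆ Aᶜ) (hA' : A' ⊆ A)
    (hmem : ((Y ∪ A', Y ∪ A') : Finset Atom × Finset Atom) ∈ SEB B P) :
    ((Y, Y) : Finset Atom × Finset Atom) ∈ SEB (B \ A) Q' := by
  set I₀ := Y ∪ A' with hI₀
  set F0 := facts (I₀ ∩ B) with hF0
  have hFB : progOver F0 B := progOver_facts Finset.inter_subset_right
  have heq := h' F0 hFB ASeparated_facts
  have hpr : projAway F0 A = facts (Y ∩ (B \ A)) := by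
    rw [hF0, projAway_facts]
    congr 1
    ext a
    simp only [Finset.mem_sdiff, Finset.mem_inter, Finset.mem_union, hI₀]
    constructor
    · rintro ⟨⟨h1 | h1, h2⟩, h3⟩
      · exact ⟨h1, h2, h3⟩
      · exact absurd (hA' h1) h3
    · rintro ⟨h1, h2, h3⟩
      exact ⟨⟨Or.inl h1, h2⟩, h3⟩
  rw [hpr] at heq
  obtain ⟨hc1, hsatP, hminP, _⟩ := mem_SEB.mp hmem
  have hAS : I₀ ∈ AS (P ∪ F0) := by
    refine ⟨?_, ?_⟩
    · rw [reduct_union]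
      refine sat_union.mpr ⟨sat_reduct_self.mpr hsatP, ?_⟩
      rw [hF0, reduct_facts]
      exact sat_facts.mpr Finset.inter_subset_left
    · intro J hJ hsatJ
      rw [reduct_union, hF0, reduct_facts] at hsatJ
      obtain ⟨h1, h2⟩ := sat_union.mp hsatJ
      have hIB : I₀ ∩ B ⊆ J := sat_facts.mp h2
      have hJB : J ∩ B = I₀ ∩ B := by
        refine Finset.Subset.antisymm
          (Finset.inter_subset_inter_right hJ.subset) ?_
        · intro a ha
          exact Finset.mem_inter.mpr ⟨hIB ha, (Finset.mem_inter.mp ha).2⟩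
      exact hminP J hJ hJB h1
  have hYmem : Y ∈ AS (Q' ∪ facts (Y ∩ (B \ A))) := by
    rw [← heq]
    exact ⟨I₀, hAS, union_sdiff_A hY hA'⟩
  obtain ⟨hsat, hmin⟩ := hYmem
  rw [reduct_union, reduct_facts] at hsat
  obtain ⟨h1, h2⟩ := sat_union.mp hsat
  refine ⟨Or.inl rfl, sat_reduct_self.mp h1, ?_, fun hx => absurd rfl hx.ne⟩
  intro Y' hY' hYC hsatY'
  refine hmin Y' hY' ?_
  rw [reduct_union, reduct_facts]
  refine sat_union.mpr ⟨hsatY', sat_facts.mpr ?_⟩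
  rw [← hYC]
  exact Finset.inter_subset_left

lemma nontotL {P Q' : ASPProgram Atom} {A B : Finset Atom}
    (hQ' : progOver Q' Aᶜ) (h' : SimpEq P A B Q') {X Y : Finset Atom}
    (hmem : ((X, Y) : Finset Atom × Finset Atom) ∈ SEB (B \ A) Q')
    (hne : X ≠ Y) : X ∈ RInter P A B Y := by
  obtain ⟨hc1, hsatQ, hminQ, hwit⟩ := mem_SEB.mp hmem
  have hXC : X ⊂ Y ∩ (B \ A) := hc1.resolve_left hne
  have hYA : Y ⊆ Aᶜ := SEB_over hQ' sdiffBA_subset_compl hmem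
  have htot : ((Y, Y) : Finset Atom × Finset Atom) ∈ SEB (B \ A) Q' :=
    ⟨Or.inl rfl, hsatQ, hminQ, fun hx => absurd rfl hx.ne⟩
  set D := (Y ∩ (B \ A)) \ X with hD
  set R3 := facts X ∪ pairs D with hR3
  have hXsub : X ⊆ Y ∩ (B \ A) := hXC.subset
  have hXY' : X ⊆ Y := hXsub.trans Finset.inter_subset_left
  have hXBA : X ⊆ B \ A := hXsub.trans Finset.inter_subset_right
  have hDsub : D ⊆ Y ∩ (B \ A) := Finset.sdiff_subset
  have hDY : D ⊆ Y := hDsub.trans Finset.inter_subset_left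
  have hDBA : D ⊆ B \ A := hDsub.trans Finset.inter_subset_right
  have hXD : X ∪ D = Y ∩ (B \ A) := Finset.union_sdiff_of_subset hXsub
  have hR3B : progOver R3 B := progOver_union.mpr
    ⟨progOver_facts (hXBA.trans Finset.sdiff_subset),
     progOver_pairs (hDBA.trans Finset.sdiff_subset)⟩
  have hR3c : progOver R3 Aᶜ := progOver_union.mpr
    ⟨progOver_facts (hXBA.trans sdiffBA_subset_compl),
     progOver_pairs (hDBA.trans sdiffBA_subset_compl)⟩
  have hXsubY : X ⊂ Y := lt_of_lt_of_le hXC Finset.inter_subset_left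
  obtain ⟨X', hX'Y, hX'C, hX'sat⟩ := hwit hXsubY
  have hnotAS : Y ∉ AS (Q' ∪ R3) := by
    intro hAS
    have hX'ssub : X' ⊂ Y := by
      refine lt_of_le_of_ne hX'Y ?_
      rintro rfl
      exact hXC.ne hX'C.symm
    refine hAS.2 X' hX'ssub ?_
    rw [reduct_union]
    refine sat_union.mpr ⟨hX'sat, ?_⟩
    rw [hR3, reduct_union, reduct_facts, reduct_pairs]
    refine sat_union.mpr ⟨sat_facts.mpr ?_, sat_pairs.mpr ?_⟩
    · rw [← hX'C]; exact Finset.inter_subset_left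
    · intro c hc hcX' c' hc'
      exfalso
      have hcX : c ∈ X := by
        rw [← hX'C]; exact Finset.mem_inter.mpr ⟨hcX', hDBA hc⟩
      exact (Finset.mem_sdiff.mp hc).2 hcX
  constructor
  · obtain ⟨A₀, hA₀, hm⟩ := totL h' htot
    exact ⟨_, A₀, hA₀, hm, rfl⟩
  · rintro S ⟨A', hA'A, hA'tot, rfl⟩
    set I₀ := Y ∪ A' with hI₀
    set R4 := R3 ∪ facts (A' ∩ B) with hR4
    have hA'BA : A' ∩ B ⊆ A := Finset.inter_subset_left.trans hA'A
    have hR4B : progOver R4 B := progOver_union.mpr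
      ⟨hR3B, progOver_facts Finset.inter_subset_right⟩
    have heq4 := h' R4 hR4B ⟨R3, facts (A' ∩ B), rfl, hR3c, progOver_facts hA'BA⟩
    have hpr : projAway R4 A = R3 := by
      rw [hR4, projAway_union, projAway_over hR3c,
        projAway_facts_subsetA hA'BA, Finset.union_empty]
    rw [hpr] at heq4
    obtain ⟨_, hsatP, hminP, _⟩ := mem_SEB.mp hA'tot
    have hYI : Y ⊆ I₀ := Finset.subset_union_left
    have hI₀AS : I₀ ∉ AS (P ∪ R4) := by
      intro hAS
      apply hnotAS
      rw [← heq4]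
      exact ⟨I₀, hAS, union_sdiff_A hYA hA'A⟩
    have hsatI : sat I₀ (reduct (P ∪ R4) I₀) := by
      rw [reduct_union]
      refine sat_union.mpr ⟨sat_reduct_self.mpr hsatP, ?_⟩
      rw [hR4, reduct_union, hR3, reduct_union, reduct_facts, reduct_pairs,
        reduct_facts]
      exact sat_union.mpr ⟨sat_union.mpr ⟨sat_facts.mpr (hXY'.trans hYI),
        sat_pairs.mpr fun _ _ _ => hDY.trans hYI⟩,
        sat_facts.mpr (Finset.inter_subset_left.trans Finset.subset_union_right)⟩
    have hex : ¬ ∀ J ⊂ I₀, ¬ sat J (reduct (P ∪ R4) I₀) :=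
      fun hmin => hI₀AS ⟨hsatI, hmin⟩
    push_neg at hex
    obtain ⟨J, hJ, hsatJ⟩ := hex
    rw [reduct_union] at hsatJ
    obtain ⟨hJP, hJR4⟩ := sat_union.mp hsatJ
    rw [hR4, reduct_union, hR3, reduct_union, reduct_facts, reduct_pairs,
      reduct_facts] at hJR4
    obtain ⟨hJR3, hJA'⟩ := sat_union.mp hJR4
    obtain ⟨hJX, hJpair⟩ := sat_union.mp hJR3
    have hJXs : X ⊆ J := sat_facts.mp hJX
    have hJA's : A' ∩ B ⊆ J := sat_facts.mp hJA'
    have hJBne : J ∩ B ≠ I₀ ∩ B := fun he => hminP J hJ he hJP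
    have hDJ : D ∩ J = ∅ := by
      by_contra hne2
      obtain ⟨c, hc⟩ := Finset.nonempty_of_ne_empty hne2
      obtain ⟨hcD, hcJ⟩ := Finset.mem_inter.mp hc
      have hDJ' : D ⊆ J := sat_pairs.mp hJpair c hcD hcJ
      apply hJBne
      refine Finset.Subset.antisymm
        (Finset.inter_subset_inter_right hJ.subset) ?_
      intro a ha
      obtain ⟨haI, haB⟩ := Finset.mem_inter.mp ha
      rcases Finset.mem_union.mp haI with haY | haA'
      · by_cases haA : a ∈ A
        · exact absurd haA (Finset.mem_compl.mp (hYA haY))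
        · have : a ∈ Y ∩ (B \ A) :=
            Finset.mem_inter.mpr ⟨haY, Finset.mem_sdiff.mpr ⟨haB, haA⟩⟩
          rw [← hXD] at this
          rcases Finset.mem_union.mp this with h | h
          · exact Finset.mem_inter.mpr ⟨hJXs h, haB⟩
          · exact Finset.mem_inter.mpr ⟨hDJ' h, haB⟩
      · exact Finset.mem_inter.mpr ⟨hJA's (Finset.mem_inter.mpr ⟨haA', haB⟩), haB⟩
    have hJC : J ∩ (B \ A) = X := by
      refine Finset.Subset.antisymm ?_
        (fun a ha => Finset.mem_inter.mpr ⟨hJXs ha, hXBA ha⟩)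
      intro a ha
      obtain ⟨haJ, haBA⟩ := Finset.mem_inter.mp ha
      have haI : a ∈ I₀ := hJ.subset haJ
      have haY : a ∈ Y := by
        rcases Finset.mem_union.mp haI with h | h
        · exact h
        · exact absurd (hA'A h) (Finset.mem_sdiff.mp haBA).2
      have haYC : a ∈ Y ∩ (B \ A) := Finset.mem_inter.mpr ⟨haY, haBA⟩
      rw [← hXD] at haYC
      rcases Finset.mem_union.mp haYC with h | h
      · exact h
      · exfalso
        rw [Finset.eq_empty_iff_forall_notMem] at hDJ
        exact hDJ a (Finset.mem_inter.mpr ⟨h, haJ⟩)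
    have hJBsub : J ∩ B ⊂ I₀ ∩ B :=
      lt_of_le_of_ne (Finset.inter_subset_inter_right hJ.subset) hJBne
    refine ⟨J ∩ B, ⟨Or.inr hJBsub, hsatP, hminP, fun _ => ⟨J, hJ.subset, rfl, hJP⟩⟩, ?_⟩
    rw [Finset.inter_sdiff_assoc, hJC]

lemma nontotR {P Q' : ASPProgram Atom} {A B : Finset Atom}
    (h' : SimpEq P A B Q') {X Y : Finset Atom} (hY : Y ⊆ Aᶜ)
    (hXY : X ⊂ Y ∩ (B \ A)) (hX : X ∈ RInter P A B Y) :
    ((X, Y) : Finset Atom × Finset Atom) ∈ SEB (B \ A) Q' := by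
  obtain ⟨hneF, hall⟩ := hX
  obtain ⟨S₀, A₀, hA₀A, hA₀tot, hS₀⟩ := hneF
  have htot : ((Y, Y) : Finset Atom × Finset Atom) ∈ SEB (B \ A) Q' :=
    totR h' hY hA₀A hA₀tot
  obtain ⟨_, hsatQ, hminQ, _⟩ := mem_SEB.mp htot
  set D := (Y ∩ (B \ A)) \ X with hD
  set R3 := facts X ∪ pairs D with hR3
  have hXsub : X ⊆ Y ∩ (B \ A) := hXY.subset
  have hXY' : X ⊆ Y := hXsub.trans Finset.inter_subset_left
  have hXBA : X ⊆ B \ A := hXsub.trans Finset.inter_subset_right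
  have hDsub : D ⊆ Y ∩ (B \ A) := Finset.sdiff_subset
  have hDY : D ⊆ Y := hDsub.trans Finset.inter_subset_left
  have hDBA : D ⊆ B \ A := hDsub.trans Finset.inter_subset_right
  have hXD : X ∪ D = Y ∩ (B \ A) := Finset.union_sdiff_of_subset hXsub
  have hR3B : progOver R3 B := progOver_union.mpr
    ⟨progOver_facts (hXBA.trans Finset.sdiff_subset),
     progOver_pairs (hDBA.trans Finset.sdiff_subset)⟩
  have hR3c : progOver R3 Aᶜ := progOver_union.mpr
    ⟨progOver_facts (hXBA.trans sdiffBA_subset_compl),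
     progOver_pairs (hDBA.trans sdiffBA_subset_compl)⟩
  have hXne : X ≠ Y := by
    intro he
    exact absurd (lt_of_lt_of_le (he ▸ hXY) Finset.inter_subset_left) (lt_irrefl Y)
  have hnotAS : Y ∉ AS (Q' ∪ R3) := by
    intro hAS
    have heq3 := h' R3 hR3B ⟨R3, ∅, (Finset.union_empty _).symm, hR3c, progOver_empty⟩
    rw [projAway_over hR3c] at heq3
    rw [← heq3] at hAS
    obtain ⟨I, hIAS, hIA⟩ := hAS
    have hYI : Y ⊆ I := by rw [← hIA]; exact Finset.sdiff_subset
    obtain ⟨hIsat, hImin⟩ := hIAS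
    rw [reduct_union] at hIsat
    obtain ⟨hIP, hIR3⟩ := sat_union.mp hIsat
    have hYCI : Y ∩ (B \ A) ⊆ I ∩ B := by
      intro a ha
      obtain ⟨h1, h2⟩ := Finset.mem_inter.mp ha
      exact Finset.mem_inter.mpr ⟨hYI h1, (Finset.mem_sdiff.mp h2).1⟩
    have hIItot : ((I, I) : Finset Atom × Finset Atom) ∈ SEB B P := by
      refine ⟨Or.inl rfl, sat_reduct_self.mp hIP, ?_, fun hx => absurd rfl hx.ne⟩
      intro J hJ hJB hsatJ
      refine hImin J hJ ?_
      rw [reduct_union]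
      refine sat_union.mpr ⟨hsatJ, ?_⟩
      rw [hR3, reduct_union, reduct_facts, reduct_pairs]
      have hYCJ : Y ∩ (B \ A) ⊆ J := by
        intro a ha
        have : a ∈ J ∩ B := by rw [hJB]; exact hYCI ha
        exact (Finset.mem_inter.mp this).1
      exact sat_union.mpr ⟨sat_facts.mpr (hXsub.trans hYCJ),
        sat_pairs.mpr fun _ _ _ => hDsub.trans hYCJ⟩
    have hIdec : Y ∪ I ∩ A = I := by
      rw [← hIA]
      ext a
      simp only [Finset.mem_union, Finset.mem_sdiff, Finset.mem_inter]
      by_cases h : a ∈ A <;> by_cases h2 : a ∈ I <;> simp [h, h2]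
    have hS1 : X ∈ {Z | ∃ Xp : Finset Atom,
        ((Xp, Y ∪ I ∩ A) : Finset Atom × Finset Atom) ∈ SEB B P ∧ Z = Xp \ A} :=
      hall _ ⟨I ∩ A, Finset.inter_subset_right, by rw [hIdec]; exact hIItot, rfl⟩
    obtain ⟨Xp, hXp, hXpe⟩ := hS1
    rw [hIdec] at hXp
    have hXpne : Xp ≠ I := by
      rintro rfl
      exact hXne (hXpe.trans hIA)
    have hXpsub : Xp ⊂ I ∩ B := (hXp.1).resolve_left hXpne
    have hXpI : Xp ⊂ I :=
      lt_of_le_of_ne (hXpsub.subset.trans Finset.inter_subset_left) hXpne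
    obtain ⟨X', hX'I, hX'B, hX'sat⟩ := hXp.2.2.2 hXpI
    have hX'B2 : X' ∩ B = Xp := hX'B
    have hX'ssub : X' ⊂ I := by
      refine lt_of_le_of_ne hX'I ?_
      rintro rfl
      exact hXpsub.ne hX'B2.symm
    refine hImin X' hX'ssub ?_
    rw [reduct_union]
    refine sat_union.mpr ⟨hX'sat, ?_⟩
    rw [hR3, reduct_union, reduct_facts, reduct_pairs]
    refine sat_union.mpr ⟨sat_facts.mpr ?_, sat_pairs.mpr ?_⟩
    · intro a ha
      rw [hXpe] at ha
      have h2 : a ∈ Xp := (Finset.mem_sdiff.mp ha).1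
      rw [← hX'B2] at h2
      exact (Finset.mem_inter.mp h2).1
    · intro c hc hcX' c' hc'
      exfalso
      have hcB : c ∈ B := (Finset.mem_sdiff.mp (hDBA hc)).1
      have hcA : c ∉ A := (Finset.mem_sdiff.mp (hDBA hc)).2
      have hcXp : c ∈ Xp := by
        rw [← hX'B2]; exact Finset.mem_inter.mpr ⟨hcX', hcB⟩
      have hcX : c ∈ X := by
        rw [hXpe]; exact Finset.mem_sdiff.mpr ⟨hcXp, hcA⟩
      exact (Finset.mem_sdiff.mp hc).2 hcX
  have hsatY : sat Y (reduct (Q' ∪ R3) Y) := by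
    rw [reduct_union]
    refine sat_union.mpr ⟨sat_reduct_self.mpr hsatQ, ?_⟩
    rw [hR3, reduct_union, reduct_facts, reduct_pairs]
    exact sat_union.mpr ⟨sat_facts.mpr hXY', sat_pairs.mpr fun _ _ _ => hDY⟩
  have hex : ¬ ∀ J ⊂ Y, ¬ sat J (reduct (Q' ∪ R3) Y) :=
    fun hmin => hnotAS ⟨hsatY, hmin⟩
  push_neg at hex
  obtain ⟨J, hJ, hsatJ⟩ := hex
  rw [reduct_union] at hsatJ
  obtain ⟨hJQ, hJR3⟩ := sat_union.mp hsatJ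
  rw [hR3, reduct_union, reduct_facts, reduct_pairs] at hJR3
  obtain ⟨hJX, hJpair⟩ := sat_union.mp hJR3
  have hJXs : X ⊆ J := sat_facts.mp hJX
  have hDJ : D ∩ J = ∅ := by
    by_contra hne2
    obtain ⟨c, hc⟩ := Finset.nonempty_of_ne_empty hne2
    obtain ⟨hcD, hcJ⟩ := Finset.mem_inter.mp hc
    have hDJ' : D ⊆ J := sat_pairs.mp hJpair c hcD hcJ
    have hJCeq : J ∩ (B \ A) = Y ∩ (B \ A) := by
      refine Finset.Subset.antisymm
        (Finset.inter_subset_inter_right hJ.subset) ?_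
      intro a ha
      have haC : a ∈ B \ A := (Finset.mem_inter.mp ha).2
      have haXD : a ∈ X ∪ D := by rw [hXD]; exact ha
      rcases Finset.mem_union.mp haXD with h | h
      · exact Finset.mem_inter.mpr ⟨hJXs h, haC⟩
      · exact Finset.mem_inter.mpr ⟨hDJ' h, haC⟩
    exact hminQ J hJ hJCeq hJQ
  have hJC : J ∩ (B \ A) = X := by
    refine Finset.Subset.antisymm ?_
      (fun a ha => Finset.mem_inter.mpr ⟨hJXs ha, hXBA ha⟩)
    intro a ha
    obtain ⟨haJ, haBA⟩ := Finset.mem_inter.mp ha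
    have haY : a ∈ Y := hJ.subset haJ
    have haYC : a ∈ Y ∩ (B \ A) := Finset.mem_inter.mpr ⟨haY, haBA⟩
    rw [← hXD] at haYC
    rcases Finset.mem_union.mp haYC with h | h
    · exact h
    · exfalso
      rw [Finset.eq_empty_iff_forall_notMem] at hDJ
      exact hDJ a (Finset.mem_inter.mpr ⟨h, haJ⟩)
  exact ⟨Or.inr hXY, hsatQ, hminQ, fun _ => ⟨J, hJ.subset, hJC, hJQ⟩⟩

end Lemmas


/-- a program `Q` over `𝒰 ∖ A` whose relativized SE-models match the
intersections `⋂𝓡^Y_{⟨P,A,B⟩}` is a `B`-relativized `A`-simplification of `P` iff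
`P` is `B`-relativized `A`-simplifiable. -/
theorem stmt11 {Atom : Type} [DecidableEq Atom] [Fintype Atom]
    (P Q : ASPProgram Atom) (A B : Finset Atom) (hQ : progOver Q Aᶜ)
    (hSE : SERel Q Aᶜ (B \ A) =
      {p : Finset Atom × Finset Atom | p.2 ⊆ Aᶜ ∧ p.1 ∈ RInter P A B p.2}) :
    SimpEq P A B Q ↔ ∃ Q' : ASPProgram Atom, progOver Q' Aᶜ ∧ SimpEq P A B Q' := by
  constructor
  · intro h
    exact ⟨Q, hQ, h⟩
  · rintro ⟨Q', hQ'c, h'⟩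
    have hQeq : SEB (B \ A) Q =
        {p : Finset Atom × Finset Atom | p.2 ⊆ Aᶜ ∧ p.1 ∈ RInter P A B p.2} := by
      rw [← hSE]
      ext p
      exact ⟨fun hp => ⟨hp, SEB_over hQ sdiffBA_subset_compl hp⟩, fun hp => hp.1⟩
    have hQ'eq : SEB (B \ A) Q' =
        {p : Finset Atom × Finset Atom | p.2 ⊆ Aᶜ ∧ p.1 ∈ RInter P A B p.2} := by
      ext p
      obtain ⟨X, Y⟩ := p
      simp only [Set.mem_setOf_eq]
      constructor
      · intro hp
        have hYA : Y ⊆ Aᶜ := SEB_over hQ'c sdiffBA_subset_compl hp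
        refine ⟨hYA, ?_⟩
        by_cases hne : X = Y
        · subst hne
          obtain ⟨A₀, hA₀, hm⟩ := totL h' hp
          refine ⟨⟨_, A₀, hA₀, hm, rfl⟩, ?_⟩
          rintro S ⟨A', hA'A, hA'tot, rfl⟩
          exact ⟨X ∪ A', hA'tot, (union_sdiff_A hYA hA'A).symm⟩
        · exact nontotL hQ'c h' hp hne
      · rintro ⟨hYA, hXR⟩
        by_cases hne : X = Y
        · subst hne
          obtain ⟨⟨S₀, A₀, hA₀A, hA₀tot, _⟩, _⟩ := hXR
          exact totR h' hYA hA₀A hA₀tot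
        · have hQmem : ((X, Y) : Finset Atom × Finset Atom) ∈ SEB (B \ A) Q := by
            rw [hQeq]
            exact ⟨hYA, hXR⟩
          have hXC : X ⊂ Y ∩ (B \ A) := hQmem.1.resolve_left hne
          exact nontotR h' hYA hXC hXR
    intro R hRB hRsep
    obtain ⟨R₁, R₂, rfl, hR₁, hR₂⟩ := hRsep
    have hpr : projAway (R₁ ∪ R₂) A = R₁ ∪ projAway R₂ A := by
      rw [projAway_union, projAway_over hR₁]
    have hover : progOver (R₁ ∪ projAway R₂ A) (B \ A) := by
      refine progOver_union.mpr ⟨?_, ?_⟩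
      · intro r hr
        obtain ⟨o1, o2, o3, o4⟩ := hR₁ r hr
        obtain ⟨b1, b2, b3, b4⟩ := hRB r (Finset.mem_union_left _ hr)
        refine ⟨?_, ?_, ?_, ?_⟩ <;>
          intro a ha <;>
          refine Finset.mem_sdiff.mpr ⟨?_, ?_⟩
        · exact b1 ha
        · exact Finset.mem_compl.mp (o1 ha)
        · exact b2 ha
        · exact Finset.mem_compl.mp (o2 ha)
        · exact b3 ha
        · exact Finset.mem_compl.mp (o3 ha)
        · exact b4 ha
        · exact Finset.mem_compl.mp (o4 ha)
      · intro r hr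
        simp only [projAway, Finset.mem_image, Finset.mem_filter] at hr
        obtain ⟨r', ⟨hr', hneg, hh⟩, rfl⟩ := hr
        obtain ⟨o1, o2, o3, o4⟩ := hR₂ r' hr'
        have hhead : r'.head = ∅ := by
          rw [← Finset.inter_eq_left.mpr o1]
          exact hh
        have hnegE : r'.neg = ∅ := by
          rw [← Finset.inter_eq_left.mpr o3]
          exact hneg
        have hposE : r'.pos \ A = ∅ := Finset.sdiff_eq_empty_iff_subset.mpr o2
        have hnnE : r'.nneg \ A = ∅ := Finset.sdiff_eq_empty_iff_subset.mpr o4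
        refine ⟨?_, ?_, ?_, ?_⟩
        · simp only [hhead]
          exact Finset.empty_subset _
        · simp only [hposE]
          exact Finset.empty_subset _
        · simp only [hnegE]
          exact Finset.empty_subset _
        · simp only [hnnE]
          exact Finset.empty_subset _
    rw [h' _ hRB ⟨R₁, R₂, rfl, hR₁, hR₂⟩, hpr]
    exact AS_union_eq hover (hQ'eq.trans hQeq.symm)
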